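/- Let f : ℝⁿ → ℝ be bounded from below, δ ∈ (0,1), μ > 0, 0 < γ_min ≤ γ_max, τ > 1 and L > 0. Let (x^k)_{k∈ℕ} ⊂ ℝⁿ, symmetric matrices H_k with ⟨H_k v, v⟩ ≥ μ‖v‖² for all v, scalars γ_k ≥ γ_min, and functions m_k : ℝⁿ → ℝ with m_k(x^k) = f(x^k) such that: (i) for every k, x^{k+1} is a global minimizer of x ↦ m_k(x) + (γ_k/2)‖x−x^k‖²_{H_k} and |f(x^{k+1}) − m_k(x^{k+1})| ≤ δ·(γ_k/2)·‖x^{k+1}−x^k‖²_{H_k}; (ii) for every k, either γ_k ≤ τ·γ_max, or there exists x̂^k ∈ ℝⁿ which is a global minimizer of x ↦ m_k(x) + (γ_k/(2τ))‖x−x^k‖²_{H_k} and which violates the acceptance criterion, i.e. |f(x̂^k) − m_k(x̂^k)| > δ·(γ_k/(2τ))·‖x̂^k−x^k‖²_{H_k}; (iii) for every k, the model error g_k := m_k − f is differentiable on ℝⁿ with ‖∇g_k(x)‖ ≤ L‖x − x^k‖ for all x ∈ ℝⁿ. If a subsequence (x^{k_j}) converges to some x* ∈ ℝⁿ, then γ_{k_j}·‖x^{k_j+1}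 − x^{k_j}‖ → 0 as j → ∞. -/

import Mathlib

open Matrix Filter

/-- The seminorm induced by a symmetric positive semidefinite matrix `H`:
`‖v‖_H = √⟨Hv, v⟩`. -/
noncomputable def hNorm {n : ℕ} (H : Matrix (Fin n) (Fin n) ℝ)
    (v : EuclideanSpace ℝ (Fin n)) : ℝ :=
  Real.sqrt ((H.mulVec v) ⬝ᵥ v)

open scoped Topology

/-!
The step sizes stay bounded: a rejected trial `x̂` at parameter `γ/τ` has model error larger than
`δ (γ/(2τ)) μ ‖x̂ - x‖²`, while the gradient bound caps the model error by `L ‖x̂ - x‖²`, so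
`γ ≤ 2τL/(δμ)`. Comparing the accepted minimizer with the center and using the acceptance test gives
the sufficient decrease `f(x^{k+1}) + (1-δ)/2 · γ_k ‖x^{k+1}-x^k‖²_{H_k} ≤ f(x^k)`; since `f` is
bounded below these decreases are summable, hence `γ_k ‖x^{k+1}-x^k‖²_{H_k} → 0`. Together with
`μ ‖·‖² ≤ ‖·‖²_{H_k}` and the bound on `γ_k` this forces `γ_k ‖x^{k+1}-x^k‖ → 0`.
-/

theorem norm_sub_le_mul_norm_sub_sq_of_norm_fderiv_le {E F : Type*}
    [NormedAddCommGroup E] [NormedSpace ℝ E] [NormedAddCommGroup F] [NormedSpace ℝ F]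
    {g : E → F} {c : E} {L : ℝ} (hg : Differentiable ℝ g)
    (hbound : ∀ y, ‖fderiv ℝ g y‖ ≤ L * ‖y - c‖) (y : E) :
    ‖g y - g c‖ ≤ L * ‖y - c‖ ^ 2 := by
  rcases eq_or_ne y c with rfl | hyc
  · simp
  have hL : 0 ≤ L := nonneg_of_mul_nonneg_left ((norm_nonneg _).trans (hbound y))
    (norm_pos_iff.2 (sub_ne_zero.2 hyc))
  have hball : ∀ z ∈ Metric.closedBall c ‖y - c‖, ‖fderiv ℝ g z‖ ≤ L * ‖y - c‖ := by
    intro z hz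
    rw [Metric.mem_closedBall, dist_eq_norm] at hz
    exact (hbound z).trans (mul_le_mul_of_nonneg_left hz hL)
  calc ‖g y - g c‖ ≤ L * ‖y - c‖ * ‖y - c‖ :=
        (convex_closedBall c ‖y - c‖).norm_image_sub_le_of_norm_fderiv_le (fun z _ => hg z)
          hball (Metric.mem_closedBall_self (norm_nonneg _)) (by simp [dist_eq_norm])
    _ = L * ‖y - c‖ ^ 2 := by ring

theorem sq_hNorm {n : ℕ} {H : Matrix (Fin n) (Fin n) ℝ} {v : EuclideanSpace ℝ (Fin n)}
    (hv : 0 ≤ H *ᵥ v ⬝ᵥ v) : hNorm H v ^ 2 = H *ᵥ v ⬝ᵥ v :=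
  Real.sq_sqrt hv

@[simp]
theorem hNorm_zero {n : ℕ} (H : Matrix (Fin n) (Fin n) ℝ) : hNorm H 0 = 0 := by
  simp [hNorm]

theorem le_of_acceptance_test_failed {δ μ τ γ L r q e : ℝ} (hδ : 0 < δ) (hμ : 0 < μ)
    (hτ : 0 < τ) (hγ : 0 ≤ γ) (hr : 0 ≤ r) (hq : μ * r ≤ q) (he : e ≤ L * r)
    (hfail : δ * (γ / (2 * τ)) * q < e) : γ ≤ 2 * τ * L / (δ * μ) := by
  rw [le_div_iff₀ (mul_pos hδ hμ)]
  by_contra! hL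
  have hLγ : L ≤ δ * (γ / (2 * τ)) * μ := by
    rw [show δ * (γ / (2 * τ)) * μ = γ * (δ * μ) / (2 * τ) by ring, le_div_iff₀ (by positivity)]
    linarith
  have : L * r ≤ δ * (γ / (2 * τ)) * q :=
    calc L * r ≤ δ * (γ / (2 * τ)) * μ * r := mul_le_mul_of_nonneg_right hLγ hr
      _ = δ * (γ / (2 * τ)) * (μ * r) := by ring
      _ ≤ δ * (γ / (2 * τ)) * q := mul_le_mul_of_nonneg_left hq (by positivity)
  linarith

theorem summable_of_add_le_of_forall_le {u c : ℕ → ℝ} {B : ℝ} (hc : ∀ k, 0 ≤ c k)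
    (hdec : ∀ k, u (k + 1) + c k ≤ u k) (hB : ∀ k, B ≤ u k) : Summable c := by
  refine summable_of_sum_range_le (c := u 0 - B) hc fun N => ?_
  have htel : ∑ i ∈ Finset.range N, (u i - u (i + 1)) = u 0 - u N := by
    simpa using Finset.sum_range_sub' u N
  have := Finset.sum_le_sum fun i (_ : i ∈ Finset.range N) => le_sub_iff_add_le'.2 (hdec i)
  linarith [hB N]

theorem tendsto_mul_zero_of_tendsto_mul_zero_of_mul_sq_le {ι : Type*} {l : Filter ι}
    {γ r q : ι → ℝ} {Γ μ : ℝ} (hμ : 0 < μ) (hγ : ∀ k, 0 ≤ γ k) (hγΓ : ∀ k, γ k ≤ Γ)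
    (hq : ∀ k, μ * r k ^ 2 ≤ q k) (h : Tendsto (fun k => γ k * q k) l (𝓝 0)) :
    Tendsto (fun k => γ k * r k) l (𝓝 0) := by
  have hsq : ∀ k, (γ k * r k) ^ 2 ≤ Γ / μ * (γ k * q k) := fun k => by
    have hΓ : 0 ≤ Γ := (hγ k).trans (hγΓ k)
    calc (γ k * r k) ^ 2 = γ k * (γ k * r k ^ 2) := by ring
      _ ≤ Γ * (γ k * r k ^ 2) :=
        mul_le_mul_of_nonneg_right (hγΓ k) (mul_nonneg (hγ k) (sq_nonneg _))
      _ ≤ Γ * (γ k * (q k / μ)) := by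
        have : r k ^ 2 ≤ q k / μ := (le_div_iff₀ hμ).2 (by linarith [hq k])
        gcongr
        exact hγ k
      _ = Γ / μ * (γ k * q k) := by ring
  have hbound : Tendsto (fun k => √(Γ / μ * (γ k * q k))) l (𝓝 0) := by
    simpa using (h.const_mul (Γ / μ)).sqrt
  refine tendsto_zero_iff_norm_tendsto_zero.2 (squeeze_zero (fun _ => norm_nonneg _)
    (fun k => ?_) hbound)
  exact Real.abs_le_sqrt (hsq k)

theorem stmt3_general {n : ℕ} (f : EuclideanSpace ℝ (Fin n) → ℝ)
    (hbdd : BddBelow (Set.range f))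
    (δ μ γmin γmax τ L : ℝ) (hδ : δ ∈ Set.Ioo (0 : ℝ) 1) (hμ : 0 < μ)
    (hγmin : 0 < γmin) (hτ : 1 < τ)
    (x : ℕ → EuclideanSpace ℝ (Fin n))
    (H : ℕ → Matrix (Fin n) (Fin n) ℝ)
    (hHμ : ∀ k (v : EuclideanSpace ℝ (Fin n)), μ * ‖v‖ ^ 2 ≤ ((H k).mulVec v) ⬝ᵥ v)
    (γ : ℕ → ℝ) (hγ : ∀ k, γmin ≤ γ k)
    (m : ℕ → EuclideanSpace ℝ (Fin n) → ℝ)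
    (hcenter : ∀ k, m k (x k) = f (x k))
    -- (i) `x (k+1)` is a global minimizer of the regularized model and is accepted
    (hmin : ∀ k y, m k (x (k + 1)) + γ k / 2 * (hNorm (H k) (x (k + 1) - x k)) ^ 2 ≤
      m k y + γ k / 2 * (hNorm (H k) (y - x k)) ^ 2)
    (haccept : ∀ k, |f (x (k + 1)) - m k (x (k + 1))| ≤
      δ * (γ k / 2) * (hNorm (H k) (x (k + 1) - x k)) ^ 2)
    -- (ii) either the very first trial parameter was accepted, or the last rejected trial
    -- (with parameter `γ k / τ`) produced a subproblem minimizer violating the criterion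
    (hback : ∀ k, γ k ≤ τ * γmax ∨
      ∃ xhat : EuclideanSpace ℝ (Fin n),
        (∀ y, m k xhat + γ k / (2 * τ) * (hNorm (H k) (xhat - x k)) ^ 2 ≤
          m k y + γ k / (2 * τ) * (hNorm (H k) (y - x k)) ^ 2) ∧
        δ * (γ k / (2 * τ)) * (hNorm (H k) (xhat - x k)) ^ 2 < |f xhat - m k xhat|)
    -- (iii) the model error `g_k = m_k - f` is differentiable with `‖∇g_k(x)‖ ≤ L‖x - x^k‖`
    (hgdiff : ∀ k, Differentiable ℝ (fun y => m k y - f y))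
    (hgrad : ∀ k y, ‖gradient (fun y => m k y - f y) y‖ ≤ L * ‖y - x k‖)
    (φ : ℕ → ℕ) (hφ : StrictMono φ) :
    Tendsto (fun j => γ (φ j) * ‖x (φ j + 1) - x (φ j)‖) atTop (nhds 0) := by
  obtain ⟨hδ0, hδ1⟩ := hδ
  obtain ⟨B, hB⟩ := hbdd
  have hγ0 : ∀ k, 0 ≤ γ k := fun k => hγmin.le.trans (hγ k)
  have hHnorm : ∀ k v, μ * ‖v‖ ^ 2 ≤ hNorm (H k) v ^ 2 := fun k v => by
    rw [sq_hNorm ((by positivity : 0 ≤ μ * ‖v‖ ^ 2).trans (hHμ k v))]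
    exact hHμ k v
  have herr : ∀ k y, |f y - m k y| ≤ L * ‖y - x k‖ ^ 2 := fun k y => by
    have := norm_sub_le_mul_norm_sub_sq_of_norm_fderiv_le (hgdiff k)
      (fun y => by simpa only [gradient, LinearIsometryEquiv.norm_map] using hgrad k y) y
    rwa [hcenter k, sub_self, sub_zero, Real.norm_eq_abs, abs_sub_comm] at this
  have hγbdd : ∀ k, γ k ≤ max (τ * γmax) (2 * τ * L / (δ * μ)) := fun k => by
    rcases hback k with h | ⟨xhat, -, hfail⟩
    · exact le_max_of_le_left h
    · exact le_max_of_le_right (le_of_acceptance_test_failed hδ0 hμ (by linarith) (hγ0 k)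
        (sq_nonneg _) (hHnorm k _) (herr k xhat) hfail)
  have hdec : ∀ k, f (x (k + 1)) + (1 - δ) / 2 * (γ k * hNorm (H k) (x (k + 1) - x k) ^ 2)
      ≤ f (x k) := fun k => by
    have := hmin k (x k)
    rw [sub_self, hNorm_zero, hcenter k] at this
    linarith [(abs_le.mp (haccept k)).2]
  have hsum := summable_of_add_le_of_forall_le (fun k => by have := hγ0 k; positivity) hdec
    fun k => hB (Set.mem_range_self (x k))
  rw [summable_mul_left_iff (by linarith)] at hsum
  exact (tendsto_mul_zero_of_tendsto_mul_zero_of_mul_sq_le hμ hγ0 hγbdd (fun k => hHnorm k _)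
    hsum.tendsto_atTop_zero).comp hφ.tendsto_atTop

theorem stmt3 {n : ℕ} (f : EuclideanSpace ℝ (Fin n) → ℝ)
    (hbdd : BddBelow (Set.range f))
    (δ μ γmin γmax τ L : ℝ) (hδ : δ ∈ Set.Ioo (0 : ℝ) 1) (hμ : 0 < μ)
    (hγmin : 0 < γmin) (hγminmax : γmin ≤ γmax) (hτ : 1 < τ) (hL : 0 < L)
    (x : ℕ → EuclideanSpace ℝ (Fin n))
    (H : ℕ → Matrix (Fin n) (Fin n) ℝ)
    (hHsymm : ∀ k, (H k).IsSymm)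
    (hHμ : ∀ k (v : EuclideanSpace ℝ (Fin n)), μ * ‖v‖ ^ 2 ≤ ((H k).mulVec v) ⬝ᵥ v)
    (γ : ℕ → ℝ) (hγ : ∀ k, γmin ≤ γ k)
    (m : ℕ → EuclideanSpace ℝ (Fin n) → ℝ)
    (hcenter : ∀ k, m k (x k) = f (x k))
    -- (i) `x (k+1)` is a global minimizer of the regularized model and is accepted
    (hmin : ∀ k y, m k (x (k + 1)) + γ k / 2 * (hNorm (H k) (x (k + 1) - x k)) ^ 2 ≤
      m k y + γ k / 2 * (hNorm (H k) (y - x k)) ^ 2)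
    (haccept : ∀ k, |f (x (k + 1)) - m k (x (k + 1))| ≤
      δ * (γ k / 2) * (hNorm (H k) (x (k + 1) - x k)) ^ 2)
    -- (ii) either the very first trial parameter was accepted, or the last rejected trial
    -- (with parameter `γ k / τ`) produced a subproblem minimizer violating the criterion
    (hback : ∀ k, γ k ≤ τ * γmax ∨
      ∃ xhat : EuclideanSpace ℝ (Fin n),
        (∀ y, m k xhat + γ k / (2 * τ) * (hNorm (H k) (xhat - x k)) ^ 2 ≤
          m k y + γ k / (2 * τ) * (hNorm (H k) (y - x k)) ^ 2) ∧
        δ * (γ k / (2 * τ)) * (hNorm (H k) (xhat - x k)) ^ 2 < |f xhat - m k xhat|)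
    -- (iii) the model error `g_k = m_k - f` is differentiable with `‖∇g_k(x)‖ ≤ L‖x - x^k‖`
    (hgdiff : ∀ k, Differentiable ℝ (fun y => m k y - f y))
    (hgrad : ∀ k y, ‖gradient (fun y => m k y - f y) y‖ ≤ L * ‖y - x k‖)
    (xstar : EuclideanSpace ℝ (Fin n)) (φ : ℕ → ℕ) (hφ : StrictMono φ)
    (hsub : Tendsto (fun j => x (φ j)) atTop (nhds xstar)) :
    Tendsto (fun j => γ (φ j) * ‖x (φ j + 1) - x (φ j)‖) atTop (nhds 0) :=
  stmt3_general f hbdd δ μ γmin γmax τ L hδ hμ hγmin hτ x H hHμ γ hγ m hcenter hmin haccept hback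
    hgdiff hgrad φ hφ
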